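/- arXiv:2501.19187 — 6 statements merged into one kernel-verified Lean document; each statement's English description precedes it below -/
import Mathlib

section
/- Existence of simplicial gluing in a distributive lattice: let L be a distributive lattice and let i, j, x, y : L satisfy x ⊓ i ⊓ j = y ⊓ i ⊓ j and x ⊔ i ⊔ j = y ⊔ i ⊔ j. Set z = (x ⊔ y) ⊓ (x ⊔ i) ⊓ (y ⊔ j). Then z ⊓ j = x ⊓ j, z ⊓ i = y ⊓ i, z ⊔ i ⊔ j = x ⊔ i ⊔ j, and z ⊔ i ⊔ j = y ⊔ i ⊔ j. -/
/-! Distributivity gives `(x ⊔ y) ⊓ (x ⊔ i) = x ⊔ y ⊓ i`, so `z ⊓ j = x ⊓ j ⊔ y ⊓ i ⊓ j`, which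
collapses to `x ⊓ j` because `y ⊓ i ⊓ j = x ⊓ i ⊓ j`; the meet with `i` follows by the symmetry
`(i, j, x, y) ↦ (j, i, y, x)` of `z`. On the join side, `x ⊓ y ≤ z ≤ (x ⊔ i) ⊓ (y ⊔ j)` pins
`z ⊔ i ⊔ j` to `(x ⊔ i ⊔ j) ⊓ (y ⊔ i ⊔ j)`, which is `x ⊔ i ⊔ j = y ⊔ i ⊔ j`. -/

section SimplicialGlue

variable {L : Type*} [DistribLattice L]

def simplicialGlue (i j x y : L) : L := (x ⊔ y) ⊓ (x ⊔ i) ⊓ (y ⊔ j)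

theorem simplicialGlue_comm (i j x y : L) : simplicialGlue i j x y = simplicialGlue j i y x := by
  simp only [simplicialGlue, sup_comm x y, inf_right_comm]

theorem simplicialGlue_inf_right (i j x y : L) :
    simplicialGlue i j x y ⊓ j = x ⊓ j ⊔ y ⊓ i ⊓ j := by
  rw [simplicialGlue, ← sup_inf_left, inf_assoc, inf_of_le_right (le_sup_right : j ≤ y ⊔ j),
    inf_sup_right]

theorem simplicialGlue_inf_left (i j x y : L) :
    simplicialGlue i j x y ⊓ i = y ⊓ i ⊔ x ⊓ j ⊓ i := by
  rw [simplicialGlue_comm, simplicialGlue_inf_right]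

theorem simplicialGlue_sup_sup (i j x y : L) :
    simplicialGlue i j x y ⊔ i ⊔ j = (x ⊔ i ⊔ j) ⊓ (y ⊔ i ⊔ j) := by
  have hxy : x ⊓ y ≤ simplicialGlue i j x y :=
    le_inf (le_inf (inf_le_left.trans le_sup_left) (inf_le_left.trans le_sup_left))
      (inf_le_right.trans le_sup_left)
  have hxi : simplicialGlue i j x y ≤ x ⊔ i := inf_le_left.trans inf_le_right
  have hyj : simplicialGlue i j x y ≤ y ⊔ j := inf_le_right
  refine le_antisymm (le_inf ?_ ?_) ?_
  · exact sup_le_sup_right (sup_le hxi le_sup_right) _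
  · exact sup_le (sup_le (hyj.trans (sup_le_sup_right le_sup_left _))
      (le_sup_right.trans le_sup_left)) le_sup_right
  · calc (x ⊔ i ⊔ j) ⊓ (y ⊔ i ⊔ j) = x ⊓ y ⊔ (i ⊔ j) := by
          simp only [sup_assoc, sup_inf_right]
      _ ≤ simplicialGlue i j x y ⊔ (i ⊔ j) := sup_le_sup_right hxy _
      _ = simplicialGlue i j x y ⊔ i ⊔ j := (sup_assoc _ _ _).symm

end SimplicialGlue

/-- **Existence of simplicial gluing.** In a distributive lattice,
if `x ⊓ i ⊓ j = y ⊓ i ⊓ j` and `x ⊔ i ⊔ j = y ⊔ i ⊔ j`, then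
`z = (x ⊔ y) ⊓ (x ⊔ i) ⊓ (y ⊔ j)` glues `x` and `y`. -/
theorem stmt7 {L : Type*} [DistribLattice L] (i j x y : L)
    (h₁ : x ⊓ i ⊓ j = y ⊓ i ⊓ j) (h₂ : x ⊔ i ⊔ j = y ⊔ i ⊔ j) :
    ((x ⊔ y) ⊓ (x ⊔ i) ⊓ (y ⊔ j)) ⊓ j = x ⊓ j ∧
    ((x ⊔ y) ⊓ (x ⊔ i) ⊓ (y ⊔ j)) ⊓ i = y ⊓ i ∧
    ((x ⊔ y) ⊓ (x ⊔ i) ⊓ (y ⊔ j)) ⊔ i ⊔ j = x ⊔ i ⊔ j ∧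
    ((x ⊔ y) ⊓ (x ⊔ i) ⊓ (y ⊔ j)) ⊔ i ⊔ j = y ⊔ i ⊔ j := by
  have hy : y ⊓ i ⊓ j ≤ x ⊓ j := h₁ ▸ inf_le_inf_right j inf_le_left
  have hx : x ⊓ j ⊓ i ≤ y ⊓ i := by
    rw [inf_right_comm, h₁]
    exact inf_le_left
  have hsup : simplicialGlue i j x y ⊔ i ⊔ j = x ⊔ i ⊔ j := by
    rw [simplicialGlue_sup_sup, h₂, inf_idem]
  exact ⟨(simplicialGlue_inf_right i j x y).trans (sup_eq_left.2 hy),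
    (simplicialGlue_inf_left i j x y).trans (sup_eq_left.2 hx), hsup, hsup.trans h₂⟩
end

section
/- Algebraic form of the statement that the interval is simplicial: let L be a distributive lattice and let i, j, x, y : L satisfy x ⊓ i ⊓ j = y ⊓ i ⊓ j and x ⊔ i ⊔ j = y ⊔ i ⊔ j. Then there exists a unique z : L such that z ⊓ j = x ⊓ j, z ⊔ i ⊔ j = x ⊔ i ⊔ j, z ⊓ i = y ⊓ i, and z ⊔ i ⊔ j = y ⊔ i ⊔ j. -/
/-!
The witness is `z = (x ⊓ j) ⊔ (y ⊓ i) ⊔ (x ⊓ y)`. It is unique because in a distributive lattice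
an element is determined by its meet and join with `i ⊔ j`, and its meet with `i ⊔ j` is
`(z ⊓ i) ⊔ (z ⊓ j)`.
-/

section

variable {L : Type*} [DistribLattice L]

theorem eq_of_inf_eq_of_inf_eq_of_sup_sup_eq {i j w z : L} (hi : w ⊓ i = z ⊓ i)
    (hj : w ⊓ j = z ⊓ j) (hsup : w ⊔ i ⊔ j = z ⊔ i ⊔ j) : w = z := by
  apply eq_of_inf_eq_sup_eq (a := i ⊔ j)
  · rw [inf_sup_left, inf_sup_left, hi, hj]
  · simpa only [sup_assoc] using hsup

def interpolant (i j x y : L) : L := x ⊓ j ⊔ y ⊓ i ⊔ x ⊓ y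

theorem interpolant_symm (i j x y : L) : interpolant j i y x = interpolant i j x y := by
  simp only [interpolant, sup_comm (y ⊓ i), inf_comm y x]

theorem interpolant_inf_right {i j x y : L} (h : x ⊓ i ⊓ j = y ⊓ i ⊓ j) :
    interpolant i j x y ⊓ j = x ⊓ j := by
  refine le_antisymm ?_ (le_inf (le_sup_of_le_left le_sup_left) inf_le_right)
  rw [interpolant, inf_sup_right, inf_sup_right]
  refine sup_le (sup_le inf_le_left ?_) (inf_le_inf_right j inf_le_left)
  calc y ⊓ i ⊓ j = x ⊓ i ⊓ j := h.symm
    _ ≤ x ⊓ j := inf_le_inf_right j inf_le_left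

theorem interpolant_inf_left {i j x y : L} (h : x ⊓ i ⊓ j = y ⊓ i ⊓ j) :
    interpolant i j x y ⊓ i = y ⊓ i := by
  rw [← interpolant_symm]
  apply interpolant_inf_right
  simp only [inf_right_comm _ j i, h]

theorem interpolant_sup_sup {i j x y : L} (h : x ⊔ i ⊔ j = y ⊔ i ⊔ j) :
    interpolant i j x y ⊔ i ⊔ j = x ⊔ i ⊔ j := by
  have hxy : x ⊓ y ⊔ (i ⊔ j) = x ⊔ (i ⊔ j) := by
    simp only [sup_inf_right, ← sup_assoc, h, inf_idem]
  have hxj : x ⊓ j ≤ x ⊔ (i ⊔ j) := inf_le_left.trans le_sup_left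
  have hyi : y ⊓ i ≤ x ⊔ (i ⊔ j) := inf_le_right.trans (le_sup_of_le_right le_sup_left)
  calc interpolant i j x y ⊔ i ⊔ j = x ⊓ j ⊔ y ⊓ i ⊔ (x ⊓ y ⊔ (i ⊔ j)) := by
        simp only [interpolant, sup_assoc]
    _ = x ⊔ i ⊔ j := by rw [hxy, sup_assoc, sup_eq_right.2 hyi, sup_eq_right.2 hxj, sup_assoc]

end

/-- **The interval is simplicial, algebraic form.** In a distributive
lattice, if `x ⊓ i ⊓ j = y ⊓ i ⊓ j` and `x ⊔ i ⊔ j = y ⊔ i ⊔ j`, then there is a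
unique `z` agreeing with `x` modulo `i ≤ j` and with `y` modulo `j ≤ i`. -/
theorem stmt8 {L : Type*} [DistribLattice L] (i j x y : L)
    (h₁ : x ⊓ i ⊓ j = y ⊓ i ⊓ j) (h₂ : x ⊔ i ⊔ j = y ⊔ i ⊔ j) :
    ∃! z : L,
      z ⊓ j = x ⊓ j ∧ z ⊔ i ⊔ j = x ⊔ i ⊔ j ∧
      z ⊓ i = y ⊓ i ∧ z ⊔ i ⊔ j = y ⊔ i ⊔ j := by
  have hsup := interpolant_sup_sup h₂
  refine ⟨interpolant i j x y,
    ⟨interpolant_inf_right h₁, hsup, interpolant_inf_left h₁, hsup.trans h₂⟩, ?_⟩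
  rintro w ⟨hwj, hwsup, hwi, -⟩
  exact eq_of_inf_eq_of_inf_eq_of_sup_sup_eq (hwi.trans (interpolant_inf_left h₁).symm)
    (hwj.trans (interpolant_inf_right h₁).symm) (hwsup.trans hsup.symm)
end

section
/- Congruences and complements in a bounded distributive lattice: let L be a distributive lattice with a bounded order (least element ⊥ and greatest element ⊤) and let a, b : L. Then every lattice congruence on L that relates a and b also relates ⊥ and ⊤ if and only if a and b are complements, i.e. a ⊓ b = ⊥ and a ⊔ b = ⊤. -/
/-! A congruence relating complements `a`, `b` relates `⊥ = a ⊓ b` and `⊤ = a ⊔ b`, because any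
congruence relating `a` and `b` relates `a ⊓ b` and `a ⊔ b`. Conversely, in a distributive lattice
`x ↦ (x ⊓ (a ⊓ b), x ⊔ (a ⊔ b))` is a lattice homomorphism identifying `a` and `b`; its kernel
relates `⊥` and `⊤` only if `a ⊓ b = ⊥` and `a ⊔ b = ⊤`. -/

/-- A lattice congruence: an equivalence relation compatible with meet and join. -/
structure IsLatticeCongruence {L : Type*} [Lattice L] (r : L → L → Prop) : Prop where
  equiv : Equivalence r
  inf_compat : ∀ a b c d, r a b → r c d → r (a ⊓ c) (b ⊓ d)
  sup_compat : ∀ a b c d, r a b → r c d → r (a ⊔ c) (b ⊔ d)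

theorem IsLatticeCongruence.inf_rel_sup {L : Type*} [Lattice L] {r : L → L → Prop}
    (hr : IsLatticeCongruence r) {a b : L} (hab : r a b) : r (a ⊓ b) (a ⊔ b) := by
  have hinf : r (a ⊓ b) b := by
    simpa using hr.inf_compat a b b b hab (hr.equiv.refl b)
  have hsup : r (a ⊔ b) b := by
    simpa using hr.sup_compat a b b b hab (hr.equiv.refl b)
  exact hr.equiv.trans hinf (hr.equiv.symm hsup)

theorem LatticeHom.isLatticeCongruence_ker {L M : Type*} [Lattice L] [Lattice M]
    (f : LatticeHom L M) : IsLatticeCongruence (fun x y => f x = f y) where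
  equiv := ⟨fun _ => rfl, Eq.symm, Eq.trans⟩
  inf_compat _ _ _ _ h₁ h₂ := by simp only [map_inf, h₁, h₂]
  sup_compat _ _ _ _ h₁ h₂ := by simp only [map_sup, h₁, h₂]

def infSupLatticeHom {L : Type*} [DistribLattice L] (c d : L) : LatticeHom L (L × L) where
  toFun x := (x ⊓ c, x ⊔ d)
  map_sup' x y := Prod.ext (inf_sup_right x y c) (sup_sup_distrib_right x y d)
  map_inf' x y := Prod.ext (inf_inf_distrib_right x y c) (sup_inf_right x y d)

@[simp]
theorem infSupLatticeHom_apply {L : Type*} [DistribLattice L] (c d x : L) :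
    infSupLatticeHom c d x = (x ⊓ c, x ⊔ d) :=
  rfl

/-- In a bounded distributive lattice, every lattice congruence
relating `a` and `b` also relates `⊥` and `⊤` iff `a` and `b` are complements. -/
theorem stmt10 {L : Type*} [DistribLattice L] [BoundedOrder L] (a b : L) :
    (∀ r : L → L → Prop, IsLatticeCongruence r → r a b → r (⊥ : L) (⊤ : L)) ↔
      (a ⊓ b = ⊥ ∧ a ⊔ b = ⊤) := by
  constructor
  · intro h
    let f := infSupLatticeHom (a ⊓ b) (a ⊔ b)
    have hfab : f a = f b := Prod.ext (by simp [f]) (by simp [f])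
    have hf := h _ f.isLatticeCongruence_ker hfab
    simp only [f, infSupLatticeHom_apply, bot_inf_eq, top_inf_eq, bot_sup_eq, top_sup_eq,
      Prod.mk.injEq] at hf
    exact ⟨hf.1.symm, hf.2⟩
  · rintro ⟨hinf, hsup⟩ r hr hab
    simpa only [hinf, hsup] using hr.inf_rel_sup hab
end

section
/- The Zariski presentation is subcanonical (sheaf condition for the ring): let R be a commutative ring and let f : Fin n → R generate the unit ideal. Suppose given x : ∀ i, Localization.Away (f i) such that for all i, j : Fin n, the images of x i and x j in Localization.Away (f i * f j) (under the canonical maps induced by localizing further) coincide. Then there exists a unique a : R whose image under the localization map R → Localization.Away (f i) equals x i for every i. -/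
/-!
For a covering indexed by a subset `s ⊆ R` this is
`Localization.existsUnique_algebraMap_eq_of_span_eq_top`. Passing from `f` to its range needs
that the sections at indices `i, j` with `f i = f j` agree; this holds because the restriction
`R_a → R_{a * a}` is injective (even an isomorphism, `a` being already a unit in `R_a`).
-/

open IsLocalization

namespace Localization

variable {R : Type*} [CommSemiring R]

theorem awayToAwayRight_self_injective (a : R) :
    Function.Injective (Away.awayToAwayRight (S := Away a) (P := Away (a * a)) a a) := by
  have : IsLocalization.Away (a * a) (Away a) :=
    Away.mul_of_isUnit a a (Away.algebraMap_isUnit a)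
  let e := IsLocalization.algEquiv (Submonoid.powers (a * a)) (Away (a * a)) (Away a)
  have he : (e : Away (a * a) →+* Away a).comp (Away.awayToAwayRight a a) = RingHom.id _ :=
    IsLocalization.ringHom_ext (Submonoid.powers a) <| RingHom.ext fun r ↦ by
      simp [e, Away.awayToAwayRight_eq]
  exact Function.LeftInverse.injective (g := e) (RingHom.congr_fun he)

theorem cast_eq_of_awayToAwayRight_eq_awayToAwayLeft {a b : R} (h : a = b)
    (u : Away a) (v : Away b)
    (huv : Away.awayToAwayRight (P := Away (a * b)) a b u =
      Away.awayToAwayLeft (P := Away (a * b)) b a v) :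
    h ▸ u = v := by
  subst h
  exact awayToAwayRight_self_injective a huv

theorem existsUnique_algebraMap_eq_of_span_range_eq_top {ι : Type*} (f : ι → R)
    (hf : Ideal.span (Set.range f) = ⊤) (x : ∀ i, Away (f i))
    (hx : ∀ i j, Away.awayToAwayRight (P := Away (f i * f j)) (f i) (f j) (x i) =
      Away.awayToAwayLeft (P := Away (f i * f j)) (f j) (f i) (x j)) :
    ∃! r : R, ∀ i, algebraMap R (Away (f i)) r = x i := by
  let y : ∀ a : Set.range f, Away a.1 := fun a ↦
    Set.apply_rangeSplitting f a ▸ x (Set.rangeSplitting f a)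
  have hy (i : ι) : y ⟨f i, Set.mem_range_self i⟩ = x i :=
    cast_eq_of_awayToAwayRight_eq_awayToAwayLeft _ _ _ (hx _ i)
  have hy_compat (a b : Set.range f) :
      Away.awayToAwayRight (P := Away (a * b : R)) a.1 b (y a) =
        Away.awayToAwayLeft b.1 a (y b) := by
    obtain ⟨_, i, rfl⟩ := a
    obtain ⟨_, j, rfl⟩ := b
    rw [hy, hy]
    exact hx i j
  obtain ⟨r, hr, hr_unique⟩ := existsUnique_algebraMap_eq_of_span_eq_top _ hf y hy_compat
  refine ⟨r, fun i ↦ (hr ⟨f i, Set.mem_range_self i⟩).trans (hy i), fun s hs ↦ ?_⟩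
  exact hr_unique s fun ⟨_, i, rfl⟩ ↦ (hs i).trans (hy i).symm

end Localization

/-- **The Zariski presentation is subcanonical.** Given `f : Fin n → R`
generating the unit ideal and elements `x i : Localization.Away (f i)` whose images
in `Localization.Away (f i * f j)` agree, there is a unique `a : R` restricting to
each `x i`. -/
theorem stmt12 {R : Type*} [CommRing R] {n : ℕ} (f : Fin n → R)
    (hf : Ideal.span (Set.range f) = ⊤)
    (x : ∀ i, Localization.Away (f i))
    (hx : ∀ i j : Fin n,
      IsLocalization.Away.awayToAwayRight (P := Localization.Away (f i * f j))
          (f i) (f j) (x i) =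
        IsLocalization.Away.awayToAwayLeft (P := Localization.Away (f i * f j))
          (f j) (f i) (x j)) :
    ∃! a : R, ∀ i, algebraMap R (Localization.Away (f i)) a = x i :=
  Localization.existsUnique_algebraMap_eq_of_span_range_eq_top f hf x hx
end

section
/- Zariski descent for modules: let R be a commutative ring, M an R-module, and f : Fin n → R a family generating the unit ideal. Consider the sequence ∏_{i} M_{f i} → ∏_{i,j} M_{f i * f j} → ∏_{i,j,k} M_{f i * f j * f k}, where M_g denotes the localized module LocalizedModule at the powers of g, the first map sends a family (u_i) to the family whose (i,j)-component is (image of u_i) − (image of u_j) in M_{f i * f j}, and the second map sends a family (v_{i,j}) to the family whose (i,j,k)-component is (image of v_{i,j}) − (image of v_{i,k}) + (image of v_{j,k}) in M_{f i * f j * f k}. Then this sequence is exact at the middle term: the kernel of the second map equals the range of the first. -/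
/-- The canonical further-localization map `M_g → M_h` of localized modules, for `g ∣ h`:
the unique `R`-linear map commuting with the localization maps from `M`. -/
noncomputable def locMap {R : Type*} [CommRing R] {M : Type*} [AddCommGroup M] [Module R M]
    (g h : R) (hdvd : g ∣ h) :
    LocalizedModule (Submonoid.powers g) M →ₗ[R] LocalizedModule (Submonoid.powers h) M :=
  LocalizedModule.lift _ (LocalizedModule.mkLinearMap (Submonoid.powers h) M) (by
    obtain ⟨c, rfl⟩ := hdvd
    rintro ⟨x, k, rfl⟩
    show IsUnit
      (algebraMap R (Module.End R (LocalizedModule (Submonoid.powers (g * c)) M)) (g ^ k))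
    rw [map_pow]
    refine IsUnit.pow _ ?_
    have hgc : IsUnit
        (algebraMap R (Module.End R (LocalizedModule (Submonoid.powers (g * c)) M)) (g * c)) :=
      IsLocalizedModule.map_units (LocalizedModule.mkLinearMap (Submonoid.powers (g * c)) M)
        ⟨g * c, Submonoid.mem_powers _⟩
    rw [map_mul] at hgc
    exact (((Commute.all g c).map
      (algebraMap R (Module.End R (LocalizedModule (Submonoid.powers (g * c)) M)))).isUnit_mul_iff.mp
      hgc).1)

/-! Clearing denominators, a cocycle is `v i j = w i j / (f i * f j) ^ N` for a single `N`, and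
after enlarging `N` the cocycle identity `f k ^ N • w i j - f j ^ N • w i k + f i ^ N • w j k = 0`
holds already in `M`. Writing `1 = ∑ t, a t * f t ^ N`, the family `u i = ∑ t, a t • w i t / f i ^ N`
is a primitive: by the identity with `k = t`, the `(i, j)`-component of its coboundary is
`∑ t, a t * f t ^ N • w i j / (f i * f j) ^ N = v i j`. -/

open Filter LocalizedModule

section

variable {R : Type*} [CommRing R] {M : Type*} [AddCommGroup M] [Module R M]

lemma LocalizedModule.mk_add {S : Submonoid R} (m m' : M) (s : S) :
    mk (m + m') s = mk m s + mk m' s := by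
  simp only [IsLocalizedModule.mk_eq_mk', IsLocalizedModule.mk'_add]

lemma LocalizedModule.mk_sub {S : Submonoid R} (m m' : M) (s : S) :
    mk (m - m') s = mk m s - mk m' s := by
  simp only [IsLocalizedModule.mk_eq_mk', IsLocalizedModule.mk'_sub]

lemma locMap_comp_mkLinearMap (g h : R) (hdvd : g ∣ h) :
    locMap (M := M) g h hdvd ∘ₗ mkLinearMap (Submonoid.powers g) M =
      mkLinearMap (Submonoid.powers h) M :=
  lift_comp _ _ _

lemma locMap_comp (g₁ g₂ g₃ : R) (h₁₂ : g₁ ∣ g₂) (h₂₃ : g₂ ∣ g₃) :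
    locMap (M := M) g₂ g₃ h₂₃ ∘ₗ locMap g₁ g₂ h₁₂ = locMap g₁ g₃ (h₁₂.trans h₂₃) :=
  (lift_unique _ _ _ _ <| by
    rw [LinearMap.comp_assoc, locMap_comp_mkLinearMap, locMap_comp_mkLinearMap]).symm

@[simp]
lemma locMap_locMap (g₁ g₂ g₃ : R) (h₁₂ : g₁ ∣ g₂) (h₂₃ : g₂ ∣ g₃)
    (x : LocalizedModule (Submonoid.powers g₁) M) :
    locMap g₂ g₃ h₂₃ (locMap g₁ g₂ h₁₂ x) = locMap g₁ g₃ (h₁₂.trans h₂₃) x :=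
  LinearMap.congr_fun (locMap_comp g₁ g₂ g₃ h₁₂ h₂₃) x

lemma locMap_mk {g h c : R} (hc : h = g * c) (hdvd : g ∣ h) (m : M) (k : ℕ) :
    locMap g h hdvd (mk m (Submonoid.pow g k)) = mk (c ^ k • m) (Submonoid.pow h k) := by
  rw [locMap, lift_mk, Module.End.algebraMap_isUnit_inv_apply_eq_iff, mkLinearMap_apply,
    Submonoid.pow_coe, smul'_mk, smul_smul, ← mul_pow, ← hc]
  exact (mk_cancel (Submonoid.pow h k) m).symm

lemma mk_pow_eq_mk_pow_add (g : R) (m : M) (j k : ℕ) :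
    mk m (Submonoid.pow g k) = mk (g ^ j • m) (Submonoid.pow g (j + k)) := by
  rw [← mk_cancel_common_left (Submonoid.pow g j) (Submonoid.pow g k) m, Submonoid.smul_def]
  congr 1
  exact Subtype.ext (by simp [pow_add])

lemma mk_pow_eq_zero_iff (g : R) (m : M) (k : ℕ) :
    mk m (Submonoid.pow g k) = 0 ↔ ∀ᶠ L in atTop, g ^ L • m = 0 := by
  rw [← zero_mk 1, mk_eq, eventually_atTop]
  simp only [one_smul, smul_zero, Subtype.exists, Submonoid.mk_smul, Submonoid.mem_powers_iff]
  constructor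
  · rintro ⟨_, ⟨L, rfl⟩, hL⟩
    refine ⟨L, fun L' hL' => ?_⟩
    rw [← Nat.sub_add_cancel hL', pow_add, mul_smul, hL, smul_zero]
  · rintro ⟨L, hL⟩
    exact ⟨_, ⟨L, rfl⟩, hL L le_rfl⟩

lemma eventually_exists_mk_pow_eq (g : R) (x : LocalizedModule (Submonoid.powers g) M) :
    ∀ᶠ N in atTop, ∃ m : M, x = mk m (Submonoid.pow g N) := by
  induction x using induction_on with
  | h m s =>
    obtain ⟨_, k, rfl⟩ := s
    filter_upwards [eventually_ge_atTop k] with N hN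
    refine ⟨g ^ (N - k) • m, ?_⟩
    exact (mk_pow_eq_mk_pow_add g m (N - k) k).trans (by rw [Nat.sub_add_cancel hN])

variable {ι : Type*}

def IsCechCocycle (f : ι → R)
    (v : ∀ p : ι × ι, LocalizedModule (Submonoid.powers (f p.1 * f p.2)) M) : Prop :=
  ∀ i j k : ι,
    locMap (f i * f j) (f i * f j * f k) (dvd_mul_right _ _) (v (i, j))
      - locMap (f i * f k) (f i * f j * f k) ⟨f j, by ring⟩ (v (i, k))
      + locMap (f j * f k) (f i * f j * f k) ⟨f i, by ring⟩ (v (j, k)) = 0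

noncomputable def cechCoboundary (f : ι → R)
    (u : ∀ i, LocalizedModule (Submonoid.powers (f i)) M) :
    ∀ p : ι × ι, LocalizedModule (Submonoid.powers (f p.1 * f p.2)) M :=
  fun p => locMap (f p.1) (f p.1 * f p.2) (dvd_mul_right _ _) (u p.1)
    - locMap (f p.2) (f p.1 * f p.2) (dvd_mul_left _ _) (u p.2)

lemma isCechCocycle_cechCoboundary (f : ι → R)
    (u : ∀ i, LocalizedModule (Submonoid.powers (f i)) M) :
    IsCechCocycle f (cechCoboundary f u) := by
  intro i j k
  simp only [cechCoboundary, map_sub, locMap_locMap]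
  abel

lemma IsCechCocycle.exists_eq_mk_pow [Finite ι] {f : ι → R}
    {v : ∀ p : ι × ι, LocalizedModule (Submonoid.powers (f p.1 * f p.2)) M}
    (hv : IsCechCocycle f v) :
    ∃ (N : ℕ) (w : ι × ι → M), (∀ p, v p = mk (w p) (Submonoid.pow (f p.1 * f p.2) N)) ∧
      ∀ i j k, f k ^ N • w (i, j) - f j ^ N • w (i, k) + f i ^ N • w (j, k) = 0 := by
  obtain ⟨N, hN⟩ := (eventually_all.2 fun p => eventually_exists_mk_pow_eq _ (v p)).exists
  choose w hw using hN
  have hcoc : ∀ i j k, ∀ᶠ L in atTop, (f i * f j * f k) ^ L •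
      (f k ^ N • w (i, j) - f j ^ N • w (i, k) + f i ^ N • w (j, k)) = 0 := by
    intro i j k
    have hvijk := hv i j k
    rw [hw (i, j), hw (i, k), hw (j, k), locMap_mk (c := f k) rfl,
      locMap_mk (c := f j) (by ring), locMap_mk (c := f i) (by ring)] at hvijk
    rwa [← mk_sub, ← mk_add, mk_pow_eq_zero_iff] at hvijk
  obtain ⟨L, hL⟩ := (eventually_all.2 fun t : ι × ι × ι => hcoc t.1 t.2.1 t.2.2).exists
  refine ⟨L + N, fun p => (f p.1 * f p.2) ^ L • w p,
    fun p => (hw p).trans (mk_pow_eq_mk_pow_add _ _ L N), fun i j k => ?_⟩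
  rw [← hL (i, j, k)]
  module

lemma exists_cechCoboundary_eq [Fintype ι] {f : ι → R} (hf : Ideal.span (Set.range f) = ⊤)
    (N : ℕ) (w : ι × ι → M)
    (hw : ∀ i j k, f k ^ N • w (i, j) - f j ^ N • w (i, k) + f i ^ N • w (j, k) = 0) :
    ∃ u, cechCoboundary f u = fun p => mk (w p) (Submonoid.pow (f p.1 * f p.2) N) := by
  obtain ⟨a, ha⟩ : ∃ a : ι → R, ∑ t, a t * f t ^ N = 1 := by
    have hN := Ideal.span_pow_eq_top _ hf N
    rw [← Set.range_comp] at hN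
    exact Ideal.mem_span_range_iff_exists_fun.1 ((Ideal.eq_top_iff_one _).1 hN)
  refine ⟨fun i => ∑ t, a t • mk (w (i, t)) (Submonoid.pow (f i) N), funext fun ⟨i, j⟩ => ?_⟩
  have hrel : ∀ t, f j ^ N • w (i, t) - f i ^ N • w (j, t) = f t ^ N • w (i, j) := fun t => by
    linear_combination (norm := module) -hw i j t
  calc cechCoboundary f _ (i, j)
      = ∑ t, a t • mk (f j ^ N • w (i, t) - f i ^ N • w (j, t))
          (Submonoid.pow (f i * f j) N) := by
        simp only [cechCoboundary, map_sum, map_smul, locMap_mk (c := f j) rfl,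
          locMap_mk (c := f i) (mul_comm _ _), ← Finset.sum_sub_distrib, ← smul_sub, mk_sub]
    _ = ∑ t, (a t * f t ^ N) • mk (w (i, j)) (Submonoid.pow (f i * f j) N) := by
        simp only [hrel, ← smul'_mk, smul_smul]
    _ = mk (w (i, j)) (Submonoid.pow (f i * f j) N) := by
        rw [← Finset.sum_smul, ha, one_smul]

end

/-- **Zariski descent for modules.** For `f : Fin n → R` generating the unit
ideal, the Amitsur-style sequence of localized modules
`∏ᵢ M_{f i} → ∏_{i,j} M_{f i * f j} → ∏_{i,j,k} M_{f i * f j * f k}` is exact in the middle. -/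
theorem stmt13 {R : Type*} [CommRing R] {M : Type*} [AddCommGroup M] [Module R M]
    {n : ℕ} (f : Fin n → R) (hf : Ideal.span (Set.range f) = ⊤) :
    {v : ∀ p : Fin n × Fin n, LocalizedModule (Submonoid.powers (f p.1 * f p.2)) M |
      ∀ i j k : Fin n,
        locMap (f i * f j) (f i * f j * f k) (dvd_mul_right _ _) (v (i, j))
          - locMap (f i * f k) (f i * f j * f k) ⟨f j, by ring⟩ (v (i, k))
          + locMap (f j * f k) (f i * f j * f k) ⟨f i, by ring⟩ (v (j, k)) = 0} =
    Set.range (fun (u : ∀ i, LocalizedModule (Submonoid.powers (f i)) M) =>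
      fun p : Fin n × Fin n =>
        locMap (f p.1) (f p.1 * f p.2) (dvd_mul_right _ _) (u p.1)
          - locMap (f p.2) (f p.1 * f p.2) (dvd_mul_left _ _) (u p.2)) := by
  ext v
  constructor
  · intro hv
    obtain ⟨N, w, hvw, hw⟩ := IsCechCocycle.exists_eq_mk_pow hv
    obtain ⟨u, hu⟩ := exists_cechCoboundary_eq hf N w hw
    exact ⟨u, hu.trans (funext hvw).symm⟩
  · rintro ⟨u, rfl⟩
    exact isCechCocycle_cechCoboundary f u
end

section
/- Amitsur exactness for a faithfully flat algebra: let R be a commutative ring, A a commutative R-algebra that is faithfully flat as an R-module, and M an R-module. Consider the R-linear maps d₀ : M ⊗[R] A → M ⊗[R] A ⊗[R] A determined by m ⊗ a ↦ m ⊗ a ⊗ 1 − m ⊗ 1 ⊗ a, and d₁ : M ⊗[R] A ⊗[R] A → M ⊗[R] A ⊗[R] A ⊗[R] A determined by m ⊗ a ⊗ b ↦ m ⊗ a ⊗ b ⊗ 1 − m ⊗ a ⊗ 1 ⊗ b + m ⊗ 1 ⊗ a ⊗ b. Then the sequence is exact at the middle term: the kernel of d₁ equals the range of d₀. -/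
/-!
Tensoring the Amitsur complex `M ⊗ A → M ⊗ A ⊗ A → M ⊗ A ⊗ A ⊗ A` once more with `A` on the
right makes it contractible: multiplying the last two tensor factors is a homotopy between the
identity and zero in the middle degree. Hence the base-changed complex is exact, and faithful
flatness of `A` reflects this exactness back to the original complex.
-/

open TensorProduct

lemma LinearMap.exact_of_comp_eq_zero_of_homotopy {R M N P : Type*} [Ring R]
    [AddCommGroup M] [AddCommGroup N] [AddCommGroup P] [Module R M] [Module R N] [Module R P]
    {f : M →ₗ[R] N} {g : N →ₗ[R] P} (s : N →ₗ[R] M) (t : P →ₗ[R] N)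
    (hgf : g ∘ₗ f = 0) (hst : t ∘ₗ g + f ∘ₗ s = LinearMap.id) : Function.Exact f g :=
  exact_of_comp_of_mem_range hgf fun y hy => ⟨s y, by simpa [hy] using congr($hst y)⟩

namespace Amitsur

set_option maxSynthPendingDepth 3

variable (R : Type*) [CommRing R] (A : Type*) [CommRing A] [Algebra R A]

noncomputable def tmulOne (N : Type*) [AddCommGroup N] [Module R N] : N →ₗ[R] N ⊗[R] A :=
  (TensorProduct.mk R N A).flip 1

noncomputable def contract (N : Type*) [AddCommGroup N] [Module R N] :
    (N ⊗[R] A) ⊗[R] A →ₗ[R] N ⊗[R] A :=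
  (LinearMap.mul' R A).lTensor N ∘ₗ (TensorProduct.assoc R N A A).toLinearMap

variable (M : Type*) [AddCommGroup M] [Module R M]

noncomputable def d₀ : M ⊗[R] A →ₗ[R] (M ⊗[R] A) ⊗[R] A :=
  tmulOne R A _ - (tmulOne R A M).rTensor A

noncomputable def d₁ : (M ⊗[R] A) ⊗[R] A →ₗ[R] ((M ⊗[R] A) ⊗[R] A) ⊗[R] A :=
  tmulOne R A _ - (tmulOne R A _).rTensor A + ((tmulOne R A M).rTensor A).rTensor A

variable {R A M}

@[simp] lemma tmulOne_apply {N : Type*} [AddCommGroup N] [Module R N] (n : N) :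
    tmulOne R A N n = n ⊗ₜ 1 := rfl

@[simp] lemma contract_tmul {N : Type*} [AddCommGroup N] [Module R N] (n : N) (b c : A) :
    contract R A N ((n ⊗ₜ b) ⊗ₜ c) = n ⊗ₜ (b * c) := rfl

@[simp] lemma d₀_tmul (m : M) (a : A) :
    d₀ R A M (m ⊗ₜ a) = (m ⊗ₜ a) ⊗ₜ 1 - (m ⊗ₜ (1 : A)) ⊗ₜ a := by
  simp [d₀]

@[simp] lemma d₁_tmul (m : M) (a b : A) :
    d₁ R A M ((m ⊗ₜ a) ⊗ₜ b) =
      ((m ⊗ₜ a) ⊗ₜ b) ⊗ₜ 1 - ((m ⊗ₜ a) ⊗ₜ (1 : A)) ⊗ₜ b + ((m ⊗ₜ (1 : A)) ⊗ₜ a) ⊗ₜ b := by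
  simp [d₁]

lemma d₁_comp_d₀ : d₁ R A M ∘ₗ d₀ R A M = 0 := by
  ext m a
  simp

lemma contract_comp_rTensor_d₁_add_rTensor_d₀_comp_contract :
    contract R A (M ⊗[R] A ⊗[R] A) ∘ₗ (d₁ R A M).rTensor A
      + (d₀ R A M).rTensor A ∘ₗ contract R A (M ⊗[R] A) = LinearMap.id := by
  ext m a b c
  simp [add_tmul, sub_tmul]

lemma exact_rTensor_d₀_d₁ : Function.Exact ((d₀ R A M).rTensor A) ((d₁ R A M).rTensor A) :=
  LinearMap.exact_of_comp_eq_zero_of_homotopy _ _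
    (by rw [← LinearMap.rTensor_comp, d₁_comp_d₀, LinearMap.rTensor_zero])
    contract_comp_rTensor_d₁_add_rTensor_d₀_comp_contract

lemma exact_d₀_d₁ [Module.FaithfullyFlat R A] : Function.Exact (d₀ R A M) (d₁ R A M) :=
  Module.FaithfullyFlat.rTensor_reflects_exact R A _ _ exact_rTensor_d₀_d₁

end Amitsur

set_option maxSynthPendingDepth 3 in
/-- **Amitsur exactness for a faithfully flat algebra.** For `A` a
faithfully flat commutative `R`-algebra and `M` an `R`-module, the sequence
`M ⊗ A → M ⊗ A ⊗ A → M ⊗ A ⊗ A ⊗ A` with differentials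
`d₀ : m⊗a ↦ m⊗a⊗1 − m⊗1⊗a` and `d₁ : m⊗a⊗b ↦ m⊗a⊗b⊗1 − m⊗a⊗1⊗b + m⊗1⊗a⊗b`
is exact at the middle term. -/
theorem stmt14 {R : Type*} [CommRing R] (A : Type*) [CommRing A] [Algebra R A]
    [Module.FaithfullyFlat R A] (M : Type*) [AddCommGroup M] [Module R M] :
    LinearMap.ker
      ((TensorProduct.mk R ((M ⊗[R] A) ⊗[R] A) A).flip 1
        - LinearMap.rTensor A ((TensorProduct.mk R (M ⊗[R] A) A).flip 1)
        + LinearMap.rTensor A (LinearMap.rTensor A ((TensorProduct.mk R M A).flip 1)))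
    = LinearMap.range
        ((TensorProduct.mk R (M ⊗[R] A) A).flip 1
          - LinearMap.rTensor A ((TensorProduct.mk R M A).flip 1)) :=
  LinearMap.exact_iff.mp Amitsur.exact_d₀_d₁
end
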